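/- Define w(n) by Σ_{n≥2} w(n)q^n = Σ_{i≥2} q^{2^{i−1}}(1+q^{2^{i−2}}) / ((1−q)·Π_{j=0}^{i−3}(1−q^{2^j})). Let n ≥ 2 not be a power of 2, with binary expansion n = Σ_{i=a}^{e} n_i·2^i, n_a ≠ 0 ≠ n_e. Then w(n) ≡ 2 + 2⌊a/2⌋ + 2χ(a even)(1−2n_{a+1})(e−a−1) + 4χ(a odd)(e−a) + 4χ(a even)·(e·Σ_{i=a+2}^{e−χ(e even)} n_i + a·n_{a+2} + Σ_{t=(a+4)/2}^{⌊(e+1)/2⌋} n_{2t−1}) (mod 8). -/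

import Mathlib

/-
The identity `(1 - q) W_{i+3}(q) = (1 + q) W_{i+2}(q²)` between consecutive summands turns the
generating function into the recurrence `w(n + 1) = w(n) + w(⌊(n + 1) / 2⌋)` for `n ≥ 3`, with
`w(2) = 1`, `w(3) = 2`. With `S(m) = ∑_{k ≤ m} w(k)` this gives `w(2m + 1) = 2 + 2 S(m)`,
`w(2m) = 2 + 2 S(m) - w(m)`, and `S(2m) ≡ 1 + S(m)`, `S(2m + 1) ≡ 3 - S(m) (mod 4)`; these
recurrences are also satisfied by `e + 2 ∑_{j < e} (e - j) m_j` with `e = ⌊log₂ m⌋`, so that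
quantity is `S(m)` modulo `4`. For `n = 2^a (2m + 1)`, iterating the even recurrence `a` times
gives `w(n) mod 8` in terms of `a` and `S(m) mod 4`, and the digit formula of the theorem reduces
to the same value once the digits of `n` above position `a` are read as the digits of `m`.
-/

/-- The i-th summand of the reduced generating function:
q^{2^{i−1}}(1+q^{2^{i−2}}) / ((1−q)·∏_{j=0}^{i−3}(1−q^{2^j})). -/
noncomputable def Wseries (i : ℕ) : PowerSeries ℤ :=
  PowerSeries.X ^ (2 ^ (i - 1)) * (1 + PowerSeries.X ^ (2 ^ (i - 2))) *
    (((1 - PowerSeries.X) *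
        ∏ j ∈ Finset.range (i - 2), (1 - PowerSeries.X ^ (2 ^ j)) :
      PowerSeries ℤ).invOfUnit 1)

open PowerSeries Finset

noncomputable def wDenom (k : ℕ) : PowerSeries ℤ :=
  (1 - X) * ∏ j ∈ range k, (1 - X ^ 2 ^ j)

lemma Wseries_add_two (k : ℕ) :
    Wseries (k + 2) = X ^ 2 ^ (k + 1) * (1 + X ^ 2 ^ k) * (wDenom k).invOfUnit 1 := rfl

lemma wDenom_mul_invOfUnit (k : ℕ) : wDenom k * (wDenom k).invOfUnit 1 = 1 :=
  mul_invOfUnit _ _ (by simp [wDenom, map_prod])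

lemma one_add_X_mul_wDenom_succ (k : ℕ) :
    (1 + X) * wDenom (k + 1) = (1 - X) * expand 2 two_ne_zero (wDenom k) := by
  simp only [wDenom, prod_range_succ', map_mul, map_sub, map_one, map_prod, map_pow, expand_X]
  simp only [pow_zero, pow_one, ← pow_mul, ← pow_succ']
  ring

lemma one_sub_X_mul_invOfUnit_wDenom_succ (k : ℕ) :
    (1 - X) * (wDenom (k + 1)).invOfUnit 1 =
      (1 + X) * expand 2 two_ne_zero ((wDenom k).invOfUnit 1) := by
  have hexp : expand 2 two_ne_zero (wDenom k) *
      expand 2 two_ne_zero ((wDenom k).invOfUnit 1) = 1 := by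
    rw [← map_mul, wDenom_mul_invOfUnit, map_one]
  calc (1 - X) * (wDenom (k + 1)).invOfUnit 1
      = (1 - X) * (wDenom (k + 1)).invOfUnit 1 *
          (expand 2 two_ne_zero (wDenom k) * expand 2 two_ne_zero ((wDenom k).invOfUnit 1)) := by
        rw [hexp, mul_one]
    _ = (1 + X) * wDenom (k + 1) * (wDenom (k + 1)).invOfUnit 1 *
          expand 2 two_ne_zero ((wDenom k).invOfUnit 1) := by
        rw [one_add_X_mul_wDenom_succ]; ring
    _ = (1 + X) * expand 2 two_ne_zero ((wDenom k).invOfUnit 1) := by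
        rw [mul_assoc (1 + X), wDenom_mul_invOfUnit, mul_one]

lemma one_sub_X_mul_Wseries_succ (k : ℕ) :
    (1 - X) * Wseries (k + 3) = (1 + X) * expand 2 two_ne_zero (Wseries (k + 2)) := by
  simp only [Wseries_add_two, map_mul, map_add, map_one, map_pow, expand_X, ← pow_mul,
    ← pow_succ']
  linear_combination X ^ 2 ^ (k + 2) * (1 + X ^ 2 ^ (k + 1)) *
    one_sub_X_mul_invOfUnit_wDenom_succ k

lemma one_sub_X_mul_Wseries_two : (1 - X) * Wseries 2 = X ^ 2 + X ^ 3 := by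
  have h : (1 - X) * (wDenom 0).invOfUnit 1 = 1 := by
    simpa only [wDenom, range_zero, prod_empty, mul_one] using wDenom_mul_invOfUnit 0
  calc (1 - X) * Wseries 2 = (X ^ 2 + X ^ 3) * ((1 - X) * (wDenom 0).invOfUnit 1) := by
        rw [Wseries_add_two]; ring
    _ = X ^ 2 + X ^ 3 := by rw [h, mul_one]

lemma coeff_succ_one_sub_X_mul (φ : PowerSeries ℤ) (n : ℕ) :
    coeff (n + 1) ((1 - X) * φ) = coeff (n + 1) φ - coeff n φ := by
  rw [sub_mul, one_mul, map_sub, coeff_succ_X_mul]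

lemma coeff_one_add_X_mul_expand_two (φ : PowerSeries ℤ) (n : ℕ) :
    coeff n ((1 + X) * expand 2 two_ne_zero φ) = coeff (n / 2) φ := by
  rcases n with _ | n
  · simp
  rw [add_mul, one_mul, map_add, coeff_succ_X_mul, coeff_expand, coeff_expand]
  rcases Nat.even_or_odd' n with ⟨k, rfl | rfl⟩
  · rw [if_neg (by omega), if_pos (by omega), zero_add, show (2 * k + 1) / 2 = 2 * k / 2 by omega]
  · rw [if_pos (by omega), if_neg (by omega), add_zero]

lemma coeff_Wseries_of_lt {k n : ℕ} (h : n < 2 ^ (k + 1)) : coeff n (Wseries (k + 2)) = 0 := by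
  rw [Wseries_add_two, mul_assoc, coeff_X_pow_mul', if_neg (by omega)]

noncomputable def wCoeff (n : ℕ) : ℤ := ∑' i : ℕ, coeff n (Wseries (i + 2))

lemma wCoeff_eq_sum {n K : ℕ} (hnK : n ≤ K) :
    wCoeff n = ∑ i ∈ range K, coeff n (Wseries (i + 2)) :=
  tsum_eq_sum fun i hi => coeff_Wseries_of_lt <|
    calc n ≤ i := hnK.trans (by simpa using hi)
      _ < 2 ^ i := Nat.lt_two_pow_self
      _ < 2 ^ (i + 1) := Nat.pow_lt_pow_succ one_lt_two

lemma wCoeff_zero : wCoeff 0 = 0 := by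
  simp [wCoeff_eq_sum le_rfl]

lemma wCoeff_succ (n : ℕ) :
    wCoeff (n + 1) = wCoeff n + wCoeff ((n + 1) / 2) + if n = 1 ∨ n = 2 then 1 else 0 := by
  have hlow : coeff (n + 1) (Wseries 2) - coeff n (Wseries 2) =
      if n = 1 ∨ n = 2 then 1 else 0 := by
    rw [← coeff_succ_one_sub_X_mul, one_sub_X_mul_Wseries_two, map_add, coeff_X_pow, coeff_X_pow]
    split_ifs <;> omega
  have hhigh (i : ℕ) : coeff (n + 1) (Wseries (i + 3)) - coeff n (Wseries (i + 3)) =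
      coeff ((n + 1) / 2) (Wseries (i + 2)) := by
    rw [← coeff_succ_one_sub_X_mul, one_sub_X_mul_Wseries_succ, coeff_one_add_X_mul_expand_two]
  have hdiff : wCoeff (n + 1) - wCoeff n =
      wCoeff ((n + 1) / 2) + if n = 1 ∨ n = 2 then 1 else 0 := by
    rw [wCoeff_eq_sum (le_refl (n + 1)), wCoeff_eq_sum (Nat.le_succ n),
      wCoeff_eq_sum (show (n + 1) / 2 ≤ n by omega), ← sum_sub_distrib, sum_range_succ', hlow]
    simp only [hhigh]
  linarith

lemma wCoeff_one : wCoeff 1 = 0 := by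
  simp [wCoeff_succ 0, wCoeff_zero]

lemma wCoeff_two : wCoeff 2 = 1 := by
  simp [wCoeff_succ 1, wCoeff_one]

lemma wCoeff_three : wCoeff 3 = 2 := by
  simp [wCoeff_succ 2, wCoeff_one, wCoeff_two]

noncomputable def wPartialSum (m : ℕ) : ℤ := ∑ k ∈ range (m + 1), wCoeff k

lemma wPartialSum_one : wPartialSum 1 = 0 := by
  simp [wPartialSum, sum_range_succ, wCoeff_zero, wCoeff_one]

lemma wPartialSum_three : wPartialSum 3 = 3 := by
  simp [wPartialSum, sum_range_succ, wCoeff_zero, wCoeff_one, wCoeff_two, wCoeff_three]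

lemma wPartialSum_succ (m : ℕ) : wPartialSum (m + 1) = wPartialSum m + wCoeff (m + 1) :=
  sum_range_succ _ _

lemma wCoeff_two_mul_add_two {m : ℕ} (hm : 1 ≤ m) :
    wCoeff (2 * m + 2) = wCoeff (2 * m + 1) + wCoeff (m + 1) := by
  rw [wCoeff_succ (2 * m + 1), if_neg (by omega), add_zero,
    show (2 * m + 1 + 1) / 2 = m + 1 by omega]

lemma wCoeff_two_mul_add_three {m : ℕ} (hm : 1 ≤ m) :
    wCoeff (2 * m + 3) = wCoeff (2 * m + 2) + wCoeff (m + 1) := by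
  rw [wCoeff_succ (2 * m + 2), if_neg (by omega), add_zero,
    show (2 * m + 2 + 1) / 2 = m + 1 by omega]

lemma wCoeff_two_mul_add_one {m : ℕ} (hm : 1 ≤ m) :
    wCoeff (2 * m + 1) = 2 + 2 * wPartialSum m := by
  induction m, hm using Nat.le_induction with
  | base => rw [wPartialSum_one, wCoeff_three]; rfl
  | succ m hm ih =>
    rw [show 2 * (m + 1) + 1 = 2 * m + 3 by ring, wCoeff_two_mul_add_three hm,
      wCoeff_two_mul_add_two hm, ih, wPartialSum_succ]
    ring

lemma wCoeff_two_mul {m : ℕ} (hm : 2 ≤ m) :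
    wCoeff (2 * m) = 2 + 2 * wPartialSum m - wCoeff m := by
  have h := wCoeff_succ (2 * m)
  rw [if_neg (by omega), add_zero, show (2 * m + 1) / 2 = m by omega,
    wCoeff_two_mul_add_one (by omega : 1 ≤ m)] at h
  linarith

lemma wPartialSum_two_mul_add_one {m : ℕ} (hm : 1 ≤ m) :
    wPartialSum (2 * m + 1) ≡ 3 - wPartialSum m [ZMOD 4] := by
  induction m, hm using Nat.le_induction with
  | base => rw [wPartialSum_one, wPartialSum_three]; rfl
  | succ m hm ih =>
    -- the new terms `w(2m+2) + w(2m+3) + w(m+1)` add up to `2 w(2m+3) = 4 + 4 S(m+1)`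
    have hstep : wPartialSum (2 * m + 3) + wPartialSum (m + 1) =
        wPartialSum (2 * m + 1) + wPartialSum m + 4 * (1 + wPartialSum (m + 1)) := by
      have h := wCoeff_two_mul_add_one (Nat.succ_pos m)
      rw [show 2 * (m + 1) + 1 = 2 * m + 3 by ring] at h
      rw [wPartialSum_succ (2 * m + 2), wPartialSum_succ (2 * m + 1), wPartialSum_succ m,
        wCoeff_two_mul_add_three hm] at *
      linear_combination 2 * h
    rw [show 2 * (m + 1) + 1 = 2 * m + 3 by ring]
    unfold Int.ModEq at ih ⊢
    omega

lemma wPartialSum_two_mul {m : ℕ} (hm : 1 ≤ m) :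
    wPartialSum (2 * m) ≡ 1 + wPartialSum m [ZMOD 4] := by
  have h := wPartialSum_two_mul_add_one hm
  rw [wPartialSum_succ, wCoeff_two_mul_add_one hm] at h
  unfold Int.ModEq at h ⊢
  omega

def wResidue (a : ℕ) (x : ℤ) : ℤ :=
  2 + 2 * (a / 2 : ℕ) + if a % 2 = 0 then 2 * x else 4 + 4 * x

lemma wResidue_congr (a : ℕ) {x y : ℤ} (h : x ≡ y [ZMOD 4]) :
    wResidue a x ≡ wResidue a y [ZMOD 8] := by
  unfold wResidue Int.ModEq at *
  split_ifs <;> omega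

lemma wResidue_succ (a : ℕ) (x : ℤ) :
    wResidue (a + 1) x ≡ 8 + 2 * a - 2 * x - wResidue a x [ZMOD 8] := by
  unfold wResidue Int.ModEq
  rcases Nat.even_or_odd' a with ⟨b, rfl | rfl⟩
  · rw [if_neg (by omega), if_pos (by omega)]
    push_cast
    omega
  · rw [if_pos (by omega), if_neg (by omega)]
    push_cast
    omega

lemma wPartialSum_two_pow_mul {m : ℕ} (hm : 1 ≤ m) (a : ℕ) :
    wPartialSum (2 ^ a * (2 * m + 1)) ≡ a + 3 - wPartialSum m [ZMOD 4] := by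
  induction a with
  | zero => simpa using wPartialSum_two_mul_add_one hm
  | succ a ih =>
    rw [pow_succ', mul_assoc]
    refine (wPartialSum_two_mul (Nat.one_le_iff_ne_zero.mpr (by positivity))).trans ?_
    unfold Int.ModEq at *
    push_cast
    omega

lemma wCoeff_two_pow_mul {m : ℕ} (hm : 1 ≤ m) (a : ℕ) :
    wCoeff (2 ^ a * (2 * m + 1)) ≡ wResidue a (wPartialSum m) [ZMOD 8] := by
  induction a with
  | zero => simp [wCoeff_two_mul_add_one hm, wResidue]
  | succ a ih =>
    have h2 : 2 ≤ 2 ^ a * (2 * m + 1) := le_mul_of_one_le_of_le Nat.one_le_two_pow (by omega)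
    rw [pow_succ', mul_assoc, wCoeff_two_mul h2]
    have hS := Int.ModEq.mul_left' (c := 2) (wPartialSum_two_pow_mul hm a)
    have hR := wResidue_succ a (wPartialSum m)
    unfold Int.ModEq at *
    omega

def binDigit (m i : ℕ) : ℤ := if m.testBit i then 1 else 0

lemma binDigit_two_mul_add_succ {r : ℕ} (hr : r < 2) (m i : ℕ) :
    binDigit (2 * m + r) (i + 1) = binDigit m i := by
  rw [binDigit, binDigit, Nat.testBit_add_one, show (2 * m + r) / 2 = m by omega]

lemma binDigit_two_mul_add_zero {r : ℕ} (hr : r < 2) (m : ℕ) : binDigit (2 * m + r) 0 = r := by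
  interval_cases r <;> simp [binDigit, Nat.testBit_zero]

lemma log_two_mul_add {r : ℕ} (hr : r < 2) {m : ℕ} (hm : m ≠ 0) :
    Nat.log 2 (2 * m + r) = Nat.log 2 m + 1 := by
  rw [Nat.log_of_one_lt_of_le one_lt_two (by omega), show (2 * m + r) / 2 = m by omega]

def bitDepthSum (m : ℕ) : ℤ :=
  ∑ j ∈ range (Nat.log 2 m), ((Nat.log 2 m : ℤ) - j) * binDigit m j

lemma bitDepthSum_two_mul_add {r : ℕ} (hr : r < 2) {m : ℕ} (hm : m ≠ 0) :
    bitDepthSum (2 * m + r) = bitDepthSum m + r * (Nat.log 2 m + 1) := by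
  rw [bitDepthSum, bitDepthSum, log_two_mul_add hr hm, sum_range_succ',
    binDigit_two_mul_add_zero hr]
  simp only [binDigit_two_mul_add_succ hr, Nat.cast_add, Nat.cast_one, add_sub_add_right_eq_sub]
  ring

lemma wPartialSum_modEq_bitDepthSum {m : ℕ} (hm : m ≠ 0) :
    wPartialSum m ≡ Nat.log 2 m + 2 * bitDepthSum m [ZMOD 4] := by
  induction m using Nat.strong_induction_on with
  | _ m ih =>
  rcases Nat.even_or_odd' m with ⟨k, rfl | rfl⟩
  · have hk : k ≠ 0 := by omega
    have h := ih k (by omega) hk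
    have hS := wPartialSum_two_mul (Nat.one_le_iff_ne_zero.mpr hk)
    have hlog := log_two_mul_add two_pos hk
    have hQ := bitDepthSum_two_mul_add two_pos hk
    simp only [add_zero, Nat.cast_zero, zero_mul] at hlog hQ
    rw [hlog, hQ]
    unfold Int.ModEq at *
    push_cast
    omega
  · rcases Nat.eq_zero_or_pos k with rfl | hk
    · rw [wPartialSum_one]; rfl
    have h := ih k (by omega) hk.ne'
    have hS := wPartialSum_two_mul_add_one hk
    rw [log_two_mul_add one_lt_two hk.ne', bitDepthSum_two_mul_add one_lt_two hk.ne']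
    unfold Int.ModEq at *
    push_cast
    omega

lemma sum_range_add_two_sub_mul (f : ℕ → ℤ) (n : ℕ) :
    ∑ j ∈ range (n + 2), ((n + 2 : ℕ) - j : ℤ) * f j =
      ∑ j ∈ range n, ((n : ℤ) - j) * f j + 2 * ∑ j ∈ range n, f j
        + 2 * f n + f (n + 1) := by
  have hweight (j : ℕ) : ((n + 2 : ℕ) - j : ℤ) * f j = ((n : ℤ) - j) * f j + 2 * f j := by
    push_cast; ring
  rw [sum_range_succ, sum_range_succ, sum_congr rfl fun j _ => hweight j, sum_add_distrib,
    ← mul_sum]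
  push_cast
  ring

lemma sum_range_sub_mul_modEq_of_even (f : ℕ → ℤ) (k : ℕ) :
    ∑ j ∈ range (2 * k), ((2 * k : ℕ) - j : ℤ) * f j ≡
      ∑ j ∈ range (2 * k), f (j + 1) + ∑ s ∈ range k, f (2 * s + 2) [ZMOD 2] := by
  induction k with
  | zero => simp
  | succ k ih =>
    rw [show 2 * (k + 1) = 2 * k + 2 by ring, sum_range_add_two_sub_mul,
      sum_range_succ _ (2 * k + 1), sum_range_succ _ (2 * k), sum_range_succ _ k,
      show 2 * k + 1 + 1 = 2 * k + 2 from rfl]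
    unfold Int.ModEq at *
    omega

lemma sum_range_sub_mul_modEq_of_odd (f : ℕ → ℤ) (k : ℕ) :
    ∑ j ∈ range (2 * k + 1), ((2 * k + 1 : ℕ) - j : ℤ) * f j ≡
      f 0 + ∑ s ∈ range k, f (2 * s + 2) [ZMOD 2] := by
  induction k with
  | zero => simp
  | succ k ih =>
    rw [show 2 * (k + 1) + 1 = 2 * k + 1 + 2 by ring, sum_range_add_two_sub_mul,
      sum_range_succ _ k, show 2 * k + 1 + 1 = 2 * k + 2 from rfl]
    unfold Int.ModEq at *
    omega

lemma bitDepthSum_modEq_two (m : ℕ) :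
    bitDepthSum m ≡ binDigit m 0 * Nat.log 2 m +
      (Nat.log 2 m + 1) * ∑ j ∈ range (Nat.log 2 m - if Nat.log 2 m % 2 = 1 then 1 else 0),
        binDigit m (j + 1) +
      ∑ s ∈ range (Nat.log 2 m / 2), binDigit m (2 * s + 2) [ZMOD 2] := by
  rw [bitDepthSum]
  rcases Nat.even_or_odd' (Nat.log 2 m) with ⟨k, hk | hk⟩ <;> rw [hk]
  · refine (sum_range_sub_mul_modEq_of_even _ k).trans (Int.modEq_iff_dvd.mpr ⟨binDigit m 0 * k +
      k * ∑ j ∈ range (2 * k), binDigit m (j + 1), ?_⟩)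
    rw [if_neg (by omega), Nat.sub_zero, show 2 * k / 2 = k by omega]
    push_cast
    ring
  · refine (sum_range_sub_mul_modEq_of_odd _ k).trans (Int.modEq_iff_dvd.mpr ⟨binDigit m 0 * k +
      (k + 1) * ∑ j ∈ range (2 * k), binDigit m (j + 1), ?_⟩)
    rw [if_pos (by omega), Nat.add_sub_cancel, show (2 * k + 1) / 2 = k by omega]
    push_cast
    ring

lemma padicValNat_two_pow_mul_odd (a m : ℕ) : padicValNat 2 (2 ^ a * (2 * m + 1)) = a := by
  rw [padicValNat.mul (by positivity) (by omega), padicValNat.prime_pow,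
    padicValNat.eq_zero_of_not_dvd (by omega), add_zero]

lemma log_two_pow_mul_odd (a : ℕ) {m : ℕ} (hm : m ≠ 0) :
    Nat.log 2 (2 ^ a * (2 * m + 1)) = a + 1 + Nat.log 2 m := by
  induction a with
  | zero => rw [pow_zero, one_mul, log_two_mul_add one_lt_two hm]; ring
  | succ a ih =>
    rw [pow_succ', mul_assoc, ← add_zero (2 * _), log_two_mul_add two_pos (by positivity), ih]
    ring

lemma binDigit_two_pow_mul_odd (a m j : ℕ) :
    binDigit (2 ^ a * (2 * m + 1)) (a + 1 + j) = binDigit m j := by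
  rw [binDigit, Nat.testBit_two_pow_mul, decide_eq_true (by omega), Bool.true_and,
    show a + 1 + j - a = j + 1 by omega, ← binDigit, binDigit_two_mul_add_succ one_lt_two]

lemma sum_Icc_eq_sum_range (g : ℕ → ℤ) (p q : ℕ) :
    ∑ i ∈ Icc p q, g i = ∑ j ∈ range (q + 1 - p), g (p + j) := by
  rw [← Finset.Ico_add_one_right_eq_Icc, sum_Ico_eq_sum_range]

def digitFormula (n : ℕ) : ℤ :=
  2 + 2 * ((padicValNat 2 n / 2 : ℕ) : ℤ)
    + 2 * (if padicValNat 2 n % 2 = 0 then (1 : ℤ) else 0) *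
        (1 - 2 * binDigit n (padicValNat 2 n + 1)) *
        ((Nat.log 2 n : ℤ) - padicValNat 2 n - 1)
    + 4 * (if padicValNat 2 n % 2 = 1 then (1 : ℤ) else 0) *
        ((Nat.log 2 n : ℤ) - padicValNat 2 n)
    + 4 * (if padicValNat 2 n % 2 = 0 then (1 : ℤ) else 0) *
        ((Nat.log 2 n : ℤ) *
            (∑ i ∈ Icc (padicValNat 2 n + 2)
                (Nat.log 2 n - if Nat.log 2 n % 2 = 0 then 1 else 0), binDigit n i)
          + (padicValNat 2 n : ℤ) * binDigit n (padicValNat 2 n + 2)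
          + ∑ t ∈ Icc ((padicValNat 2 n + 4) / 2) ((Nat.log 2 n + 1) / 2),
              binDigit n (2 * t - 1))

lemma digitFormula_two_pow_mul_odd (a : ℕ) {m : ℕ} (hm : m ≠ 0) :
    digitFormula (2 ^ a * (2 * m + 1)) ≡
      wResidue a (Nat.log 2 m + 2 * bitDepthSum m) [ZMOD 8] := by
  set L := Nat.log 2 m with hL
  rw [digitFormula, wResidue, padicValNat_two_pow_mul_odd, log_two_pow_mul_odd a hm, ← hL]
  rcases Nat.even_or_odd' a with ⟨b, rfl | rfl⟩
  · have hA : ∑ i ∈ Icc (2 * b + 2) (2 * b + 1 + L - if (2 * b + 1 + L) % 2 = 0 then 1 else 0),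
          binDigit (2 ^ (2 * b) * (2 * m + 1)) i =
        ∑ j ∈ range (L - if L % 2 = 1 then 1 else 0), binDigit m (j + 1) := by
      rw [sum_Icc_eq_sum_range]
      refine sum_congr (by congr 1; split_ifs <;> omega) fun j _ => ?_
      rw [← binDigit_two_pow_mul_odd (2 * b) m]
      congr 1; omega
    have hB : ∑ t ∈ Icc ((2 * b + 4) / 2) ((2 * b + 1 + L + 1) / 2),
          binDigit (2 ^ (2 * b) * (2 * m + 1)) (2 * t - 1) =
        ∑ s ∈ range (L / 2), binDigit m (2 * s + 2) := by
      rw [sum_Icc_eq_sum_range]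
      refine sum_congr (by congr 1; omega) fun s _ => ?_
      rw [← binDigit_two_pow_mul_odd (2 * b) m]
      congr 1; omega
    obtain ⟨t, ht⟩ := Int.modEq_iff_dvd.mp (bitDepthSum_modEq_two m)
    rw [← hL] at ht
    rw [hA, hB, binDigit_two_pow_mul_odd (2 * b) m 0]
    simp only [Nat.mul_mod_right, if_true, zero_ne_one, if_false,
      Nat.mul_div_cancel_left b two_pos]
    refine Int.modEq_iff_dvd.mpr ⟨binDigit m 0 * L - t
      - b * binDigit (2 ^ (2 * b) * (2 * m + 1)) (2 * b + 2)
      - b * ∑ j ∈ range (L - if L % 2 = 1 then 1 else 0), binDigit m (j + 1), ?_⟩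
    push_cast
    linear_combination (-4) * ht
  · rw [show (2 * b + 1) % 2 = 1 by omega, show (2 * b + 1) / 2 = b by omega]
    simp only [if_true, one_ne_zero, if_false]
    refine Int.modEq_iff_dvd.mpr ⟨bitDepthSum m, ?_⟩
    push_cast
    ring

lemma exists_eq_two_pow_mul_odd_of_not_pow {n : ℕ} (hn : n ≠ 0)
    (hnp : ¬∃ c : ℕ, n = 2 ^ c) :
    ∃ a m : ℕ, m ≠ 0 ∧ n = 2 ^ a * (2 * m + 1) := by
  obtain ⟨a, k, ⟨m, rfl⟩, rfl⟩ := Nat.exists_eq_two_pow_mul_odd hn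
  refine ⟨a, m, fun hm => hnp ⟨a, ?_⟩, rfl⟩
  rw [hm, mul_zero, zero_add, mul_one]

/-- Main theorem: congruence class of w(n) modulo 8 for n not a power of 2,
with a = v₂(n), e = ⌊log₂ n⌋ and nᵢ the binary digits of n. -/
theorem stmt10 (w : ℕ → ℤ)
    (hw : ∀ n : ℕ, w n = ∑' i : ℕ, PowerSeries.coeff (R := ℤ) n (Wseries (i + 2)))
    (n : ℕ) (hn : 2 ≤ n) (hnp : ¬∃ c : ℕ, n = 2 ^ c) :
    w n ≡
      2 + 2 * ((padicValNat 2 n / 2 : ℕ) : ℤ)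
        + 2 * (if padicValNat 2 n % 2 = 0 then (1 : ℤ) else 0) *
            (1 - 2 * (if n.testBit (padicValNat 2 n + 1) then (1 : ℤ) else 0)) *
            ((Nat.log 2 n : ℤ) - padicValNat 2 n - 1)
        + 4 * (if padicValNat 2 n % 2 = 1 then (1 : ℤ) else 0) *
            ((Nat.log 2 n : ℤ) - padicValNat 2 n)
        + 4 * (if padicValNat 2 n % 2 = 0 then (1 : ℤ) else 0) *
            ((Nat.log 2 n : ℤ) *
                (∑ i ∈ Finset.Icc (padicValNat 2 n + 2)
                    (Nat.log 2 n - if Nat.log 2 n % 2 = 0 then 1 else 0),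
                  (if n.testBit i then (1 : ℤ) else 0))
              + (padicValNat 2 n : ℤ) *
                  (if n.testBit (padicValNat 2 n + 2) then (1 : ℤ) else 0)
              + ∑ t ∈ Finset.Icc ((padicValNat 2 n + 4) / 2)
                    ((Nat.log 2 n + 1) / 2),
                  (if n.testBit (2 * t - 1) then (1 : ℤ) else 0)) [ZMOD 8] := by
  obtain rfl : w = wCoeff := funext hw
  obtain ⟨a, m, hm, rfl⟩ := exists_eq_two_pow_mul_odd_of_not_pow (by omega) hnp
  calc wCoeff (2 ^ a * (2 * m + 1))
      ≡ wResidue a (wPartialSum m) [ZMOD 8] :=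
        wCoeff_two_pow_mul (Nat.one_le_iff_ne_zero.mpr hm) a
    _ ≡ wResidue a (Nat.log 2 m + 2 * bitDepthSum m) [ZMOD 8] :=
        wResidue_congr a (wPartialSum_modEq_bitDepthSum hm)
    _ ≡ digitFormula (2 ^ a * (2 * m + 1)) [ZMOD 8] := (digitFormula_two_pow_mul_odd a hm).symm
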